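/- arXiv:1905.07483 — 2 statements merged into one kernel-verified Lean document; each statement's English description precedes it below -/
import Mathlib

section
/- Let (s,t,e) be a long triple with e = (v_a, v_{a+1}) for some index a, and let Q be a replacement path for (s,t,e) written as Q = ⟨v_0,…,v_j⟩ ∘ P_1 ∘ P_2 with j ≤ a, where P_1 is a path from v_j of exactly ⌈√n⌉ edges ending at a vertex x, P_1 is disjoint from P except for its first vertex v_j, P_2 is the remaining portion of Q from x to t, and j = ρ(x) with x ∈ V_{√n}. Then for every shortest v_{ρ(x)}-to-x path D in G', the path ⟨v_0,…,v_{ρ(x)}⟩ ∘ D ∘ P_2 is an s-to-t path in G∖{e} whose length equals d_G(s,t,e). -/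
open scoped ENat ENNReal

namespace RP

variable {V : Type*}

/-- `p` is a walk from `u` to `w` in the graph with edge relation `E`:
a nonempty list of vertices, consecutive vertices joined by edges. -/
def IsWalk (E : V → V → Prop) (p : List V) (u w : V) : Prop :=
  p ≠ [] ∧ p.head? = some u ∧ p.getLast? = some w ∧ p.Chain' E

/-- The number of edges of a path given as a list of vertices. -/
def pathLen (p : List V) : ℕ := p.length - 1

/-- Unweighted distance: minimum number of edges of a `u`-to-`w` path (`⊤` if none). -/
noncomputable def dist (E : V → V → Prop) (u w : V) : ℕ∞ :=
  sInf ((fun p => (pathLen p : ℕ∞)) '' {p | IsWalk E p u w})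

/-- Total weight of a path, for edge weights `w`. -/
def wt (w : V → V → ℝ) : List V → ℝ
  | [] => 0
  | [_] => 0
  | a :: b :: rest => w a b + wt w (b :: rest)

/-- Weighted distance: infimum of path weights (`⊤` if there is no path). -/
noncomputable def wdist (E : V → V → Prop) (w : V → V → ℝ) (u x : V) : ℝ≥0∞ :=
  sInf ((fun p => ENNReal.ofReal (wt w p)) '' {p | IsWalk E p u x})

/-- `G' = G ∖ E(P)`: the edge relation of `G` with all edges of the path
`P = ⟨v 0, …, v k⟩` removed. -/
def Eres (E : V → V → Prop) (v : ℕ → V) (k : ℕ) : V → V → Prop :=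
  fun a b => E a b ∧ ¬∃ i, i < k ∧ a = v i ∧ b = v (i + 1)

/-- `G ∖ {e}` where `e = (v a, v (a+1))` is an edge of `P`. -/
def Edel (E : V → V → Prop) (v : ℕ → V) (a : ℕ) : V → V → Prop :=
  fun x y => E x y ∧ ¬(x = v a ∧ y = v (a + 1))

/-- `x` lies on the path `P = ⟨v 0, …, v k⟩`. -/
def onPath (v : ℕ → V) (k : ℕ) (x : V) : Prop := ∃ i ≤ k, x = v i

/-- `Q` decomposes as `⟨v 0, …, v i⟩ ∘ D ∘ ⟨v j, …, v k⟩` where the detour `D` starts at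
`v i`, ends at `v j`, and meets `P` only in its first and last vertices. -/
def Detoured (v : ℕ → V) (k : ℕ) (Q D : List V) : Prop :=
  ∃ i j, i ≤ k ∧ j ≤ k ∧
    Q = ((List.range i).map v) ++ D ++ ((List.range' (j + 1) (k - j)).map v) ∧
    D.head? = some (v i) ∧ D.getLast? = some (v j) ∧
    ∀ x ∈ D, onPath v k x → x = v i ∨ x = v j

/-- `Q` is a replacement path for the triple `(s, t, e)` with `e = (v a, v (a+1))`:
a shortest `s`-to-`t` path in `G ∖ {e}`. -/
def IsRP (E : V → V → Prop) (v : ℕ → V) (s t : V) (a : ℕ) (Q : List V) : Prop :=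
  IsWalk (Edel E v a) Q s t ∧ (pathLen Q : ℕ∞) = dist (Edel E v a) s t

/-- The triple `(s, t, e)` with `e = (v a, v (a+1))` is *long*: a replacement path exists and
every replacement path has its detour part containing more than `sqn` edges. -/
def LongTriple (E : V → V → Prop) (v : ℕ → V) (k : ℕ) (s t : V) (sqn a : ℕ) : Prop :=
  (∃ Q, IsRP E v s t a Q) ∧
    ∀ Q D, IsRP E v s t a Q → Detoured v k Q D → sqn < pathLen D

/-- `V_{√n}`: vertices `x` having an index `i ≤ k` with `d_{G'}(v i, x) = sqn` and
`d_{G'}(v j, x) > sqn` for all `j < i` (such an `i` is exactly `ρ(x)`). -/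
def Vsqrt (E : V → V → Prop) (v : ℕ → V) (k sqn : ℕ) : Set V :=
  {x | ∃ i ≤ k, dist (Eres E v k) (v i) x = (sqn : ℕ∞) ∧
      ∀ j < i, (sqn : ℕ∞) < dist (Eres E v k) (v j) x}

/-- The set of vertices `v (i+1), …, v k` deleted from `G^w` to form `G^w_i`. -/
def delVerts (v : ℕ → V) (k i : ℕ) (x : V) : Prop := ∃ l, i < l ∧ l ≤ k ∧ x = v l

/-- Edge relation of `G^w_i`: `G` with the vertices `v (i+1), …, v k` deleted. -/
def Ei (E : V → V → Prop) (v : ℕ → V) (k i : ℕ) : V → V → Prop :=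
  fun a b => E a b ∧ ¬delVerts v k i a ∧ ¬delVerts v k i b

open Classical in
/-- Weights of `G^w`: `ε` on the edges of `P`, `1` on every other edge. -/
noncomputable def wP (v : ℕ → V) (k : ℕ) (ε : ℝ) : V → V → ℝ :=
  fun a b => if ∃ i, i < k ∧ a = v i ∧ b = v (i + 1) then ε else 1

end RP

/-! Every edge of `G' = G ∖ E(P)` is an edge of `G ∖ {e}`, and `Dp` has the same endpoints and
the same length `⌈√n⌉` as `P₁`. Replacing `P₁` by `Dp` in the replacement path `Q` therefore
gives an `s`-to-`t` path in `G ∖ {e}` of the same length as `Q`, namely `d_G(s,t,e)`. -/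

namespace RP

variable {V : Type*}

theorem edel_of_eres {E : V → V → Prop} {v : ℕ → V} {k a : ℕ} (ha : a < k) {x y : V}
    (h : Eres E v k x y) : Edel E v a x y :=
  ⟨h.1, fun ⟨hx, hy⟩ => h.2 ⟨a, ha, hx, hy⟩⟩

theorem IsWalk.mono {E F : V → V → Prop} (hEF : ∀ ⦃x y⦄, E x y → F x y) {p : List V} {u w : V}
    (hp : IsWalk E p u w) : IsWalk F p u w :=
  ⟨hp.1, hp.2.1, hp.2.2.1, hp.2.2.2.imp hEF⟩

section Splice

variable {A P D C : List V}

theorem isChain_splice {R : V → V → Prop} (h : (A ++ P ++ C).IsChain R) (hD : D.IsChain R)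
    (hhead : D.head? = P.head?) (hlast : D.getLast? = P.getLast?) :
    (A ++ D ++ C).IsChain R := by
  rw [List.isChain_append, List.isChain_append] at h ⊢
  obtain ⟨⟨hA, -, hAP⟩, hC, hPC⟩ := h
  refine ⟨⟨hA, hD, hhead ▸ hAP⟩, hC, ?_⟩
  simpa only [List.getLast?_append, hlast] using hPC

theorem IsWalk.splice {E : V → V → Prop} {u w : V} (h : IsWalk E (A ++ P ++ C) u w)
    (hD : D.IsChain E) (hhead : D.head? = P.head?) (hlast : D.getLast? = P.getLast?) :
    IsWalk E (A ++ D ++ C) u w := by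
  obtain ⟨-, hu, hw, hchain⟩ := h
  have hu' : (A ++ D ++ C).head? = some u := by
    simpa only [List.append_assoc, List.head?_append, hhead] using hu
  have hw' : (A ++ D ++ C).getLast? = some w := by
    simpa only [List.getLast?_append, hlast] using hw
  exact ⟨fun hnil => by simp [hnil] at hu', hu', hw', isChain_splice hchain hD hhead hlast⟩

theorem pathLen_splice (hlen : pathLen D = pathLen P) (hhead : D.head? = P.head?) :
    pathLen (A ++ D ++ C) = pathLen (A ++ P ++ C) := by
  have hlength : D.length = P.length := by
    cases D <;> cases P <;> simp_all [pathLen]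
  simp [pathLen, hlength]

end Splice

end RP

theorem stmt5_general {V : Type*}
    (E : V → V → Prop) (k : ℕ)
    (v : ℕ → V) (s t : V)
    (sqn : ℕ)
    (a : ℕ) (ha : a < k)
    (j : ℕ)
    (x : V)
    (Q P₁ P₂ : List V)
    (hQrp : RP.IsRP E v s t a Q)
    (hQeq : Q = ((List.range j).map v) ++ P₁ ++ P₂.tail)
    (hP₁head : P₁.head? = some (v j)) (hP₁last : P₁.getLast? = some x)
    (hP₁len : RP.pathLen P₁ = sqn) :
    ∀ Dp : List V, RP.IsWalk (RP.Eres E v k) Dp (v j) x → RP.pathLen Dp = sqn →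
      RP.IsWalk (RP.Edel E v a) (((List.range j).map v) ++ Dp ++ P₂.tail) s t ∧
      (RP.pathLen (((List.range j).map v) ++ Dp ++ P₂.tail) : ℕ∞) =
        RP.dist (RP.Edel E v a) s t := by
  intro Dp hDp hDplen
  obtain ⟨hQwalk, hQdist⟩ := hQrp
  subst hQeq
  have hhead : Dp.head? = P₁.head? := hDp.2.1.trans hP₁head.symm
  have hlast : Dp.getLast? = P₁.getLast? := hDp.2.2.1.trans hP₁last.symm
  have hDpwalk : RP.IsWalk (RP.Edel E v a) Dp (v j) x := hDp.mono fun _ _ => RP.edel_of_eres ha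
  refine ⟨hQwalk.splice hDpwalk.2.2.2 hhead hlast, ?_⟩
  rw [RP.pathLen_splice (hDplen.trans hP₁len.symm) hhead, hQdist]

/-- Let `(s,t,e)` (with `e = (v a, v (a+1))`) be a long triple and let
`Q = ⟨v 0, …, v j⟩ ∘ P₁ ∘ P₂` be a replacement path for it with `j ≤ a`, where `P₁` is a path
of exactly `⌈√n⌉` edges from `v j` to `x`, disjoint from `P` except for `v j`, `P₂` goes from
`x` to `t`, and `j = ρ(x)` with `x ∈ V_{√n}`. Then for every shortest `v (ρ x)`-to-`x` path
`Dp` in `G'`, the path `⟨v 0, …, v (ρ x)⟩ ∘ Dp ∘ P₂` is an `s`-to-`t` path in `G∖{e}` whose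
length equals `d_G(s,t,e)`. -/
theorem stmt5 {V : Type*} [Fintype V]
    (E : V → V → Prop) (n k : ℕ) (hn : Fintype.card V = n)
    (v : ℕ → V) (s t : V) (hs : v 0 = s) (ht : v k = t)
    (hPwalk : RP.IsWalk E ((List.range (k + 1)).map v) s t)
    (hPshort : RP.dist E s t = (k : ℕ∞))
    (sqn : ℕ) (hsqn : sqn = ⌈Real.sqrt n⌉₊)
    (a : ℕ) (ha : a < k) (hlong : RP.LongTriple E v k s t sqn a)
    (j : ℕ) (hja : j ≤ a)
    (x : V) (hxV : x ∈ RP.Vsqrt E v k sqn)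
    (hρ : RP.dist (RP.Eres E v k) (v j) x = (sqn : ℕ∞))
    (hρmin : ∀ i < j, (sqn : ℕ∞) < RP.dist (RP.Eres E v k) (v i) x)
    (Q P₁ P₂ : List V)
    (hQrp : RP.IsRP E v s t a Q)
    (hQeq : Q = ((List.range j).map v) ++ P₁ ++ P₂.tail)
    (hP₁head : P₁.head? = some (v j)) (hP₁last : P₁.getLast? = some x)
    (hP₁len : RP.pathLen P₁ = sqn)
    (hP₁disj : ∀ y ∈ P₁, RP.onPath v k y → y = v j)
    (hP₂head : P₂.head? = some x) (hP₂last : P₂.getLast? = some t) :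
    ∀ Dp : List V, RP.IsWalk (RP.Eres E v k) Dp (v j) x → RP.pathLen Dp = sqn →
      RP.IsWalk (RP.Edel E v a) (((List.range j).map v) ++ Dp ++ P₂.tail) s t ∧
      (RP.pathLen (((List.range j).map v) ++ Dp ++ P₂.tail) : ℕ∞) =
        RP.dist (RP.Edel E v a) s t :=
  stmt5_general E k v s t sqn a ha j x Q P₁ P₂ hQrp hQeq hP₁head hP₁last hP₁len
end

section
/- For all integers q ≥ 0 and j with 0 ≤ j ≤ ⌈√n⌉ − 1 and 2q⌈√n⌉ + j ≤ k: if d_{G^A}(r, v_{2q⌈√n⌉+j}) ≤ (q+1)·⌈√n⌉, then d_{G'}(v_{2q⌈√n⌉}, v_{2q⌈√n⌉+j}) = d_{G^A}(r, v_{2q⌈√n⌉+j}) − q·⌈√n⌉; otherwise d_{G'}(v_{2q⌈√n⌉}, v_{2q⌈√n⌉+j}) > ⌈√n⌉. -/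
open scoped ENat ENNReal

namespace RP

variable {V : Type*}

/-- Edge relation of the auxiliary graph `G^A_z`: the edges of `G'` (between `some`-vertices)
together with the edges `(r_z, v (z + 2q⌈√n⌉))` from the new source `none`. -/
def EAz (E : V → V → Prop) (v : ℕ → V) (k sqn z : ℕ) : Option V → Option V → Prop :=
  fun a b =>
    (∃ x y, a = some x ∧ b = some y ∧ Eres E v k x y) ∨
    (a = none ∧ ∃ q, z + 2 * q * sqn ≤ k ∧ b = some (v (z + 2 * q * sqn)))

/-- Weights of `G^A_z`: the edge `(r_z, v (z + 2q⌈√n⌉))` has weight `q·⌈√n⌉`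
(with the least such `q`); every edge of `G'` has weight `1`. -/
noncomputable def wAz (v : ℕ → V) (k sqn z : ℕ) : Option V → Option V → ℝ :=
  fun a b =>
    match a, b with
    | none, some y =>
        (sqn : ℝ) * ((sInf {q : ℕ | z + 2 * q * sqn ≤ k ∧ y = v (z + 2 * q * sqn)} : ℕ) : ℝ)
    | _, _ => 1

end RP

/-!
Write `σ = ⌈√n⌉` and `x = v (2qσ + j)`. The root of `G^A` reaches `x` only through an edge to
some `v (2q'σ)`, so `d_{G^A}(r, x)` is the least `q'σ + d_{G'}(v (2q'σ), x)`. As `P` is a shortest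
path and `G' ⊆ G`, an entry at `q' < q` costs at least `q'σ + 2(q - q')σ + j ≥ (q+1)σ + j`, and an
entry at `q' > q` costs at least `(q+1)σ + 1` because `x ≠ v (2q'σ)`. So the only entry other than
`q` that costs at most `(q+1)σ` is `q' = q - 1` when `j = 0`, and then the entry at `q` costs just
`qσ`. Hence `min (qσ + d) ((q+1)σ + 1) ≤ d_{G^A}(r, x) ≤ qσ + d` for `d = d_{G'}(v (2qσ), x)`,
and both cases of the theorem follow.
-/

namespace RP

variable {V : Type*}

section Walks

variable {E F : V → V → Prop} {p r : List V} {u w x : V}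

theorem isWalk_iff :
    IsWalk E p u w ↔ p ≠ [] ∧ p.head? = some u ∧ p.getLast? = some w ∧ p.IsChain E :=
  Iff.rfl

theorem IsWalk.mono_s9 (hEF : ∀ a b, E a b → F a b) (h : IsWalk E p u w) : IsWalk F p u w :=
  ⟨h.1, h.2.1, h.2.2.1, h.2.2.2.imp fun a b => hEF a b⟩

theorem IsWalk.append (hp : IsWalk E p u w) (hr : IsWalk E r w x) :
    IsWalk E (p ++ r.tail) u x := by
  obtain ⟨hp0, hpu, hpw, hpE⟩ := hp
  obtain ⟨hr0, hrw, hrx, hrE⟩ := hr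
  obtain ⟨b, r, rfl⟩ := List.exists_cons_of_ne_nil hr0
  obtain rfl : b = w := by simpa using hrw
  cases r with
  | nil =>
    obtain rfl : x = b := by simpa using hrx.symm
    simpa using ⟨hp0, hpu, hpw, hpE⟩
  | cons c r =>
    refine ⟨by simp [hp0], by simp [List.head?_append, hpu], ?_, ?_⟩
    · simpa [List.getLast?_append, List.getLast?_cons_cons] using hrx
    · refine List.isChain_append.mpr ⟨hpE, hrE.tail, ?_⟩
      simpa [hpw] using (List.isChain_cons_cons.mp hrE).1

theorem pathLen_append (hp : p ≠ []) : pathLen (p ++ r.tail) = pathLen p + pathLen r := by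
  have := List.length_pos_iff.mpr hp
  simp only [pathLen, List.length_append, List.length_tail]
  omega

theorem IsWalk.pos_pathLen (h : IsWalk E p u w) (huw : u ≠ w) : 0 < pathLen p := by
  obtain ⟨hp0, hpu, hpw, -⟩ := h
  match p, hp0 with
  | [a], _ => exact absurd ((Option.some.inj hpu).symm.trans (Option.some.inj hpw)) huw
  | _ :: _ :: _, _ => simp [pathLen]

theorem dist_le_pathLen (h : IsWalk E p u w) : dist E u w ≤ pathLen p :=
  sInf_le ⟨p, h, rfl⟩

theorem exists_isWalk_of_dist_eq {m : ℕ} (h : dist E u w = m) :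
    ∃ p, IsWalk E p u w ∧ pathLen p = m := by
  have hne : {p | IsWalk E p u w}.Nonempty := by
    by_contra hempty
    simp [dist, Set.not_nonempty_iff_eq_empty.mp hempty] at h
  obtain ⟨p, hp, hlen⟩ := csInf_mem (hne.image fun p => (pathLen p : ℕ∞))
  exact ⟨p, hp, ENat.natCast_inj.mp (hlen.trans h)⟩

end Walks

section ShortestPath

variable {E : V → V → Prop} {v : ℕ → V}

theorem isWalk_singleton (u : V) : IsWalk E [u] u u :=
  ⟨List.cons_ne_nil _ _, rfl, rfl, List.isChain_singleton _⟩

theorem isWalk_map_range_iff {f : ℕ → V} {n : ℕ} {u w : V} :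
    IsWalk E ((List.range (n + 1)).map f) u w ↔
      u = f 0 ∧ w = f n ∧ ∀ i < n, E (f i) (f (i + 1)) := by
  simp only [isWalk_iff, List.isChain_map, List.isChain_range_succ]
  simp [List.getLast?_range, List.head?_range, eq_comm (a := f 0), eq_comm (a := f n)]

theorem pathLen_map_range (f : ℕ → V) (n : ℕ) : pathLen ((List.range (n + 1)).map f) = n := by
  simp [pathLen]

variable {k : ℕ} (hP : ∀ i < k, E (v i) (v (i + 1))) (hshort : dist E (v 0) (v k) = k)
include hP hshort

theorem sub_le_pathLen_of_isWalk {a b : ℕ} (hab : a ≤ b) (hbk : b ≤ k) {p : List V}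
    (hp : IsWalk E p (v a) (v b)) : b - a ≤ pathLen p := by
  have hprefix : IsWalk E ((List.range (a + 1)).map v) (v 0) (v a) :=
    isWalk_map_range_iff.mpr ⟨rfl, rfl, fun i hi => hP i (by omega)⟩
  have hsuffix : IsWalk E ((List.range (k - b + 1)).map fun i => v (b + i)) (v b) (v k) :=
    isWalk_map_range_iff.mpr ⟨rfl, by congr; omega, fun i hi => hP (b + i) (by omega)⟩
  have hlen := dist_le_pathLen ((hprefix.append hp).append hsuffix)
  rw [hshort, pathLen_append (by simp), pathLen_append (by simp), pathLen_map_range,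
    pathLen_map_range] at hlen
  have : k ≤ a + pathLen p + (k - b) := by exact_mod_cast hlen
  omega

theorem injOn_of_dist_eq : Set.InjOn v (Set.Iic k) := by
  have hne {a b : ℕ} (hab : a < b) (hb : b ≤ k) : v a ≠ v b := fun heq => by
    have := sub_le_pathLen_of_isWalk hP hshort hab.le hb (p := [v a])
      (by rw [← heq]; exact isWalk_singleton _)
    simp [pathLen] at this
    omega
  intro a ha b hb hab
  by_contra hab'
  rcases Nat.lt_or_gt_of_ne hab' with hlt | hlt
  · exact hne hlt hb hab
  · exact hne hlt ha hab.symm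

end ShortestPath

section AuxiliaryGraph

variable {E : V → V → Prop} {v : ℕ → V} {k sqn z : ℕ}

theorem wt_wAz_map_some : ∀ p : List V, wt (wAz v k sqn z) (p.map some) = pathLen p
  | [] => by simp [wt, pathLen]
  | [_] => by simp [wt, pathLen]
  | a :: b :: rest => by
    rw [List.map_cons, List.map_cons, wt, ← List.map_cons, wt_wAz_map_some (b :: rest)]
    simp only [wAz, pathLen, List.length_cons]
    push_cast
    ring

/-- Once `v` is injective on `P`, the `sInf` in the definition of the weight is over `{q}`. -/
theorem wAz_none_some (hinj : Set.InjOn v (Set.Iic k)) {q : ℕ} (hq : z + 2 * q * sqn ≤ k) :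
    wAz v k sqn z none (some (v (z + 2 * q * sqn))) = sqn * q := by
  set S := {q' : ℕ | z + 2 * q' * sqn ≤ k ∧ v (z + 2 * q * sqn) = v (z + 2 * q' * sqn)}
  obtain ⟨hS, hvS⟩ : sInf S ∈ S := Nat.sInf_mem ⟨q, hq, rfl⟩
  have hidx := hinj hq hS hvS
  have : sqn * sInf S = sqn * q := by linarith
  change (sqn : ℝ) * (sInf S : ℕ) = sqn * q
  exact_mod_cast this

theorem exists_map_some_of_isChain_EAz :
    ∀ (l : List (Option V)) (y : V), (some y :: l).IsChain (EAz E v k sqn z) →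
      ∃ l' : List V, l = l'.map some ∧ (y :: l').IsChain (Eres E v k)
  | [], _, _ => ⟨[], rfl, List.isChain_singleton _⟩
  | b :: l, y, h => by
    obtain ⟨hyb, hl⟩ := List.isChain_cons_cons.mp h
    obtain ⟨y', rfl, hyy'⟩ : ∃ y', b = some y' ∧ Eres E v k y y' := by
      rcases hyb with ⟨_, y', ⟨⟩, rfl, hyy'⟩ | ⟨⟨⟩, _⟩
      exact ⟨y', rfl, hyy'⟩
    obtain ⟨l', rfl, hl'⟩ := exists_map_some_of_isChain_EAz l y' hl
    exact ⟨y' :: l', rfl, hl'.cons_cons hyy'⟩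

theorem isWalk_EAz_none_iff {P : List (Option V)} {x : V} :
    IsWalk (EAz E v k sqn z) P none (some x) ↔
      ∃ q p, z + 2 * q * sqn ≤ k ∧ IsWalk (Eres E v k) p (v (z + 2 * q * sqn)) x ∧
        P = none :: p.map some := by
  constructor
  · rintro ⟨hP0, hr, hx, hP⟩
    obtain ⟨a, rest, rfl⟩ := List.exists_cons_of_ne_nil hP0
    obtain rfl : a = none := Option.some.inj hr
    obtain ⟨b, l, rfl⟩ := List.exists_cons_of_ne_nil (show rest ≠ [] by rintro rfl; simp at hx)
    obtain ⟨hb, hl⟩ := List.isChain_cons_cons.mp hP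
    obtain ⟨q, hq, rfl⟩ : ∃ q, z + 2 * q * sqn ≤ k ∧ b = some (v (z + 2 * q * sqn)) := by
      rcases hb with ⟨_, _, ⟨⟩, _⟩ | ⟨-, hb⟩
      exact hb
    obtain ⟨l', rfl, hl'⟩ := exists_map_some_of_isChain_EAz l _ hl
    refine ⟨q, _ :: l', hq, ⟨List.cons_ne_nil _ _, rfl, ?_, hl'⟩, rfl⟩
    rw [List.getLast?_cons_cons, ← List.map_cons, List.getLast?_map] at hx
    simpa using hx
  · rintro ⟨q, p, hq, ⟨hp0, hy, hx, hl⟩, rfl⟩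
    obtain ⟨y, l, rfl⟩ := List.exists_cons_of_ne_nil hp0
    obtain rfl : y = v (z + 2 * q * sqn) := Option.some.inj hy
    refine ⟨List.cons_ne_nil _ _, rfl, ?_, ?_⟩
    · rw [List.map_cons, List.getLast?_cons_cons, ← List.map_cons, List.getLast?_map, hx]
      rfl
    · refine List.IsChain.cons_cons (Or.inr ⟨rfl, q, hq, rfl⟩) ?_
      rw [← List.map_cons, List.isChain_map]
      exact hl.imp fun a b hab => Or.inl ⟨a, b, rfl, rfl, hab⟩

variable (hinj : Set.InjOn v (Set.Iic k)) {x : V}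
include hinj

theorem wt_wAz_none_cons {q : ℕ} (hq : z + 2 * q * sqn ≤ k) {p : List V}
    (hp : IsWalk (Eres E v k) p (v (z + 2 * q * sqn)) x) :
    wt (wAz v k sqn z) (none :: p.map some) = ((sqn * q + pathLen p : ℕ) : ℝ) := by
  obtain ⟨y, l, rfl⟩ := List.exists_cons_of_ne_nil hp.1
  obtain rfl : y = v (z + 2 * q * sqn) := Option.some.inj hp.2.1
  rw [List.map_cons, wt, ← List.map_cons, wt_wAz_map_some, wAz_none_some hinj hq]
  push_cast
  ring

theorem wdist_EAz_le {q : ℕ} (hq : z + 2 * q * sqn ≤ k) {p : List V}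
    (hp : IsWalk (Eres E v k) p (v (z + 2 * q * sqn)) x) :
    wdist (EAz E v k sqn z) (wAz v k sqn z) none (some x) ≤ ((sqn * q + pathLen p : ℕ) : ℝ≥0∞) :=
  sInf_le ⟨none :: p.map some, isWalk_EAz_none_iff.mpr ⟨q, p, hq, hp, rfl⟩,
    by dsimp only; rw [wt_wAz_none_cons hinj hq hp, ENNReal.ofReal_natCast]⟩

theorem le_wdist_EAz {b : ℝ≥0∞}
    (hb : ∀ q p, z + 2 * q * sqn ≤ k → IsWalk (Eres E v k) p (v (z + 2 * q * sqn)) x →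
      b ≤ ((sqn * q + pathLen p : ℕ) : ℝ≥0∞)) :
    b ≤ wdist (EAz E v k sqn z) (wAz v k sqn z) none (some x) := by
  refine le_sInf ?_
  rintro _ ⟨P, hP, rfl⟩
  obtain ⟨q, p, hq, hp, rfl⟩ := isWalk_EAz_none_iff.mp hP
  dsimp only
  rw [wt_wAz_none_cons hinj hq hp, ENNReal.ofReal_natCast]
  exact hb q p hq hp

end AuxiliaryGraph

section RootDistance

variable {E : V → V → Prop} {v : ℕ → V} {k sqn z : ℕ}
  (hP : ∀ i < k, E (v i) (v (i + 1))) (hshort : dist E (v 0) (v k) = k)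
  {q j : ℕ} (hj : j < sqn) (hqj : z + 2 * q * sqn + j ≤ k)
include hP hshort hj hqj

theorem min_le_sqn_mul_add_pathLen {m : ℕ}
    (hm : (m : ℕ∞) ≤ dist (Eres E v k) (v (z + 2 * q * sqn)) (v (z + 2 * q * sqn + j)))
    {q' : ℕ} (hq' : z + 2 * q' * sqn ≤ k) {p : List V}
    (hp : IsWalk (Eres E v k) p (v (z + 2 * q' * sqn)) (v (z + 2 * q * sqn + j))) :
    min (sqn * q + m) ((q + 1) * sqn + 1) ≤ sqn * q' + pathLen p := by
  rcases lt_trichotomy q' q with hlt | rfl | hgt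
  · have hlen := sub_le_pathLen_of_isWalk hP hshort (by nlinarith) hqj (hp.mono_s9 fun _ _ h => h.1)
    have hmul : (q' + 1) * sqn ≤ q * sqn := Nat.mul_le_mul_right _ hlt
    rcases Nat.eq_zero_or_pos j with rfl | hj0
    · have hm0 : (m : ℕ∞) ≤ 0 := hm.trans (dist_le_pathLen (isWalk_singleton _))
      obtain rfl : m = 0 := by exact_mod_cast nonpos_iff_eq_zero.mp hm0
      refine (min_le_left _ _).trans ?_
      ring_nf at *
      omega
    · refine (min_le_right _ _).trans ?_
      ring_nf at *
      omega
  · have : (m : ℕ∞) ≤ pathLen p := hm.trans (dist_le_pathLen hp)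
    exact (min_le_left _ _).trans (Nat.add_le_add_left (by exact_mod_cast this) _)
  · have hmul : (q + 1) * sqn ≤ q' * sqn := Nat.mul_le_mul_right _ hgt
    have hne : v (z + 2 * q' * sqn) ≠ v (z + 2 * q * sqn + j) := fun h => by
      have := injOn_of_dist_eq hP hshort hq' hqj h
      ring_nf at *
      omega
    have := hp.pos_pathLen hne
    refine (min_le_right _ _).trans ?_
    ring_nf at *
    omega

theorem min_le_wdist_EAz {m : ℕ}
    (hm : (m : ℕ∞) ≤ dist (Eres E v k) (v (z + 2 * q * sqn)) (v (z + 2 * q * sqn + j))) :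
    ((min (sqn * q + m) ((q + 1) * sqn + 1) : ℕ) : ℝ≥0∞) ≤
      wdist (EAz E v k sqn z) (wAz v k sqn z) none (some (v (z + 2 * q * sqn + j))) :=
  le_wdist_EAz (injOn_of_dist_eq hP hshort) fun _ _ hq' hp => by
    exact_mod_cast min_le_sqn_mul_add_pathLen hP hshort hj hqj hm hq' hp

omit hP hshort hj in
theorem wdist_EAz_le_of_dist_eq (hinj : Set.InjOn v (Set.Iic k)) {m : ℕ}
    (hD : dist (Eres E v k) (v (z + 2 * q * sqn)) (v (z + 2 * q * sqn + j)) = m) :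
    wdist (EAz E v k sqn z) (wAz v k sqn z) none (some (v (z + 2 * q * sqn + j))) ≤
      (sqn * q + m : ℕ) := by
  obtain ⟨p, hp, rfl⟩ := exists_isWalk_of_dist_eq hD
  exact wdist_EAz_le hinj (by omega) hp

theorem wdist_EAz_eq_of_le
    (hle : wdist (EAz E v k sqn z) (wAz v k sqn z) none (some (v (z + 2 * q * sqn + j))) ≤
      ((q + 1) * sqn : ℕ)) :
    ∃ m : ℕ, dist (Eres E v k) (v (z + 2 * q * sqn)) (v (z + 2 * q * sqn + j)) = m ∧
      wdist (EAz E v k sqn z) (wAz v k sqn z) none (some (v (z + 2 * q * sqn + j))) =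
        (sqn * q + m : ℕ) := by
  set D := dist (Eres E v k) (v (z + 2 * q * sqn)) (v (z + 2 * q * sqn + j))
  obtain hD | ⟨m, hD⟩ := (eq_or_ne D ⊤).imp_right ENat.ne_top_iff_exists.mp
  · have hW := min_le_wdist_EAz hP hshort hj hqj (m := (q + 1) * sqn + 1)
      (le_top.trans_eq hD.symm)
    rw [min_eq_right (by omega)] at hW
    exact absurd (hW.trans hle) (by norm_cast; omega)
  · have hW := min_le_wdist_EAz hP hshort hj hqj hD.le
    have : min (sqn * q + m) ((q + 1) * sqn + 1) ≤ (q + 1) * sqn := by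
      exact_mod_cast hW.trans hle
    rw [min_eq_left (by omega)] at hW
    exact ⟨m, hD.symm,
      le_antisymm (wdist_EAz_le_of_dist_eq hqj (injOn_of_dist_eq hP hshort) hD.symm) hW⟩

omit hj in
theorem lt_dist_Eres_of_lt_wdist
    (hlt : ((q + 1) * sqn : ℕ) <
      wdist (EAz E v k sqn z) (wAz v k sqn z) none (some (v (z + 2 * q * sqn + j)))) :
    sqn < dist (Eres E v k) (v (z + 2 * q * sqn)) (v (z + 2 * q * sqn + j)) := by
  set D := dist (Eres E v k) (v (z + 2 * q * sqn)) (v (z + 2 * q * sqn + j))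
  obtain hD | ⟨m, hD⟩ := (eq_or_ne D ⊤).imp_right ENat.ne_top_iff_exists.mp
  · simp [hD]
  · have : (q + 1) * sqn < sqn * q + m := by
      exact_mod_cast hlt.trans_le
        (wdist_EAz_le_of_dist_eq hqj (injOn_of_dist_eq hP hshort) hD.symm)
    rw [← hD, Nat.cast_lt]
    ring_nf at this
    omega

end RootDistance

end RP

theorem stmt9_general {V : Type*}
    (E : V → V → Prop) (k : ℕ)
    (v : ℕ → V) (s t : V)
    (hPwalk : RP.IsWalk E ((List.range (k + 1)).map v) s t)
    (hPshort : RP.dist E s t = (k : ℕ∞))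
    (sqn : ℕ)
    (q j : ℕ) (hj : j < sqn) (hqj : 2 * q * sqn + j ≤ k) :
    (RP.wdist (RP.EAz E v k sqn 0) (RP.wAz v k sqn 0) none (some (v (2 * q * sqn + j))) ≤
        ENNReal.ofReal (((q : ℝ) + 1) * (sqn : ℝ)) →
      ∃ m : ℕ,
        RP.dist (RP.Eres E v k) (v (2 * q * sqn)) (v (2 * q * sqn + j)) = (m : ℕ∞) ∧
        RP.wdist (RP.EAz E v k sqn 0) (RP.wAz v k sqn 0) none (some (v (2 * q * sqn + j))) =
          ENNReal.ofReal ((m : ℝ) + (q : ℝ) * (sqn : ℝ))) ∧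
    (¬ RP.wdist (RP.EAz E v k sqn 0) (RP.wAz v k sqn 0) none (some (v (2 * q * sqn + j))) ≤
        ENNReal.ofReal (((q : ℝ) + 1) * (sqn : ℝ)) →
      (sqn : ℕ∞) < RP.dist (RP.Eres E v k) (v (2 * q * sqn)) (v (2 * q * sqn + j))) := by
  obtain ⟨rfl, rfl, hP⟩ := RP.isWalk_map_range_iff.mp hPwalk
  have hqj₀ : 0 + 2 * q * sqn + j ≤ k := by omega
  have hM : ENNReal.ofReal (((q : ℝ) + 1) * sqn) = ((q + 1) * sqn : ℕ) := by
    rw [← ENNReal.ofReal_natCast]; push_cast; rfl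
  refine ⟨fun hle => ?_, fun hgt => ?_⟩
  · obtain ⟨m, hD, hW⟩ := RP.wdist_EAz_eq_of_le hP hPshort hj hqj₀ (by simpa [hM] using hle)
    refine ⟨m, by simpa using hD, ?_⟩
    rw [show (m : ℝ) + q * sqn = ((sqn * q + m : ℕ) : ℝ) by push_cast; ring,
      ENNReal.ofReal_natCast]
    simpa using hW
  · simpa using RP.lt_dist_Eres_of_lt_wdist hP hPshort hqj₀ (by simpa [hM] using hgt)

/-- (Theorem 1 of Roditty–Zwick, for `G^A = G^A_0`.) For all `q ≥ 0` and
`0 ≤ j ≤ ⌈√n⌉ − 1` with `2q⌈√n⌉ + j ≤ k`: if `d_{G^A}(r, v (2q⌈√n⌉+j)) ≤ (q+1)·⌈√n⌉`, then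
`d_{G'}(v (2q⌈√n⌉), v (2q⌈√n⌉+j)) = d_{G^A}(r, v (2q⌈√n⌉+j)) − q·⌈√n⌉`; otherwise
`d_{G'}(v (2q⌈√n⌉), v (2q⌈√n⌉+j)) > ⌈√n⌉`. -/
theorem stmt9 {V : Type*} [Fintype V]
    (E : V → V → Prop) (n k : ℕ) (hn : Fintype.card V = n)
    (v : ℕ → V) (s t : V) (hs : v 0 = s) (ht : v k = t)
    (hPwalk : RP.IsWalk E ((List.range (k + 1)).map v) s t)
    (hPshort : RP.dist E s t = (k : ℕ∞))
    (sqn : ℕ) (hsqn : sqn = ⌈Real.sqrt n⌉₊)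
    (q j : ℕ) (hj : j < sqn) (hqj : 2 * q * sqn + j ≤ k) :
    (RP.wdist (RP.EAz E v k sqn 0) (RP.wAz v k sqn 0) none (some (v (2 * q * sqn + j))) ≤
        ENNReal.ofReal (((q : ℝ) + 1) * (sqn : ℝ)) →
      ∃ m : ℕ,
        RP.dist (RP.Eres E v k) (v (2 * q * sqn)) (v (2 * q * sqn + j)) = (m : ℕ∞) ∧
        RP.wdist (RP.EAz E v k sqn 0) (RP.wAz v k sqn 0) none (some (v (2 * q * sqn + j))) =
          ENNReal.ofReal ((m : ℝ) + (q : ℝ) * (sqn : ℝ))) ∧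
    (¬ RP.wdist (RP.EAz E v k sqn 0) (RP.wAz v k sqn 0) none (some (v (2 * q * sqn + j))) ≤
        ENNReal.ofReal (((q : ℝ) + 1) * (sqn : ℝ)) →
      (sqn : ℕ∞) < RP.dist (RP.Eres E v k) (v (2 * q * sqn)) (v (2 * q * sqn + j))) :=
  stmt9_general E k v s t hPwalk hPshort sqn q j hj hqj
end
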